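/- Suppose the compact Hausdorff space X contains at least n+1 points, where n ≥ 1, and let H be an n-dimensional Haar subspace of C(X). Let f* ∈ H be a best simultaneous approximation (BSA) to {f_a}_{a∈A} from H which satisfies, for some positive integer k with 1 ≤ k ≤ n+1 and some a₁,…,a_k ∈ A, x₁,…,x_k ∈ X, and positive reals λ₁,…,λ_k with λ₁+⋯+λ_k = 1: (i') Σ_{i=1}^{k} λᵢ (f_{aᵢ}(xᵢ) − f*(xᵢ)) f(xᵢ) = 0 for all f ∈ H; and (ii) |f_{aᵢ}(xᵢ) − f*(xᵢ)| = ‖f_{aᵢ} − f*‖ = max_{a∈A} ‖f_a − f*‖ for all i with 1 ≤ i ≤ k. If the points x₁,…,x_k are pairwise distinct and the common value in (ii) is nonzero, then there exists a positive real number γ such that max_{a∈A} ‖f_a − h‖ ≥ max_{a∈A} ‖f_a − f*‖ + γ ‖f* − h‖ for all h ∈ H. -/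

import Mathlib

/-!
Write `rᵢ = f_{aᵢ}(xᵢ) - f⋆(xᵢ)`, so that `|rᵢ| = E := max_a ‖f_a - f⋆‖ > 0`. By (i') the functional
`f ↦ ∑ λᵢ rᵢ f(xᵢ)` annihilates `H`; Haar interpolation of the values `λᵢ rᵢ` shows that this is
impossible at `n` or fewer nodes, so `k > n`. Evaluation at the nodes is then injective on `H`, and
on this finite-dimensional space `γ ‖g‖ ≤ maxᵢ λᵢ |rᵢ g(xᵢ)|` for some `γ > 0`. Annihilation also
gives `λᵢ |rᵢ g(xᵢ)| ≤ M := maxᵢ rᵢ g(xᵢ)`, so `γ ‖g‖ ≤ M`. For `g = f⋆ - h` and a node `j` where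
`M` is attained, `E² + M = r_j (f_{a_j} - h)(x_j) ≤ E · max_a ‖f_a - h‖`.
-/

/-- `H` is an `n`-dimensional Haar subspace of `C(X, ℝ)`: it has dimension `n`
and interpolation at any `n` distinct points is uniquely solvable in `H`. -/
def IsHaarSubspace {X : Type*} [TopologicalSpace X] (n : ℕ)
    (H : Submodule ℝ C(X, ℝ)) : Prop :=
  Module.finrank ℝ H = n ∧
    ∀ x : Fin n → X, Function.Injective x → ∀ r : Fin n → ℝ,
      ∃! f : H, ∀ i, (f : C(X, ℝ)) (x i) = r i

open Finset Function

theorem Submodule.exists_pos_mul_norm_le {𝕜 E F : Type*} [NontriviallyNormedField 𝕜]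
    [CompleteSpace 𝕜] [NormedAddCommGroup E] [NormedSpace 𝕜 E] [NormedAddCommGroup F]
    [NormedSpace 𝕜 F] [FiniteDimensional 𝕜 F] (V : Submodule 𝕜 E) (T : E →ₗ[𝕜] F)
    (hT : ∀ v ∈ V, T v = 0 → v = 0) : ∃ γ > 0, ∀ v ∈ V, γ * ‖v‖ ≤ ‖T v‖ := by
  have hinj : Injective (T ∘ₗ V.subtype) := by
    rw [← LinearMap.ker_eq_bot, LinearMap.ker_eq_bot']
    exact fun v hv => Subtype.ext (hT v v.2 hv)
  have : FiniteDimensional 𝕜 V := Module.Finite.of_injective _ hinj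
  obtain ⟨K, hK, hanti⟩ := (T ∘ₗ V.subtype).exists_antilipschitzWith (LinearMap.ker_eq_bot.2 hinj)
  refine ⟨(K : ℝ)⁻¹, by positivity, fun v hv => ?_⟩
  rw [inv_mul_le_iff₀ (by positivity)]
  exact ZeroHomClass.bound_of_antilipschitz _ hanti ⟨v, hv⟩

theorem abs_mul_le_of_sum_mul_eq_zero {ι : Type*} [Fintype ι] {w v : ι → ℝ} {M : ℝ}
    (hw : ∀ i, 0 ≤ w i) (hw1 : ∑ i, w i = 1) (hwv : ∑ i, w i * v i = 0) (hvM : ∀ i, v i ≤ M)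
    (i : ι) : |w i * v i| ≤ M := by
  have hgap : ∑ j, w j * (M - v j) = M := by
    simp only [mul_sub, sum_sub_distrib, ← sum_mul, hw1, hwv, one_mul, sub_zero]
  have hgap_nonneg : ∀ j, 0 ≤ w j * (M - v j) := fun j => mul_nonneg (hw j) (sub_nonneg.2 (hvM j))
  have hM : 0 ≤ M := hgap ▸ sum_nonneg fun j _ => hgap_nonneg j
  have hgap_i : w i * (M - v i) ≤ M :=
    (single_le_sum (fun j _ => hgap_nonneg j) (mem_univ i)).trans_eq hgap
  have hwi : w i ≤ 1 := hw1 ▸ single_le_sum (fun j _ => hw j) (mem_univ i)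
  rw [abs_le]
  constructor <;> nlinarith [mul_le_mul_of_nonneg_left (hvM i) (hw i), mul_nonneg (hw i) hM]

namespace IsHaarSubspace

variable {X : Type*} [TopologicalSpace X] {n k : ℕ} {H : Submodule ℝ C(X, ℝ)} {x : Fin k → X}

theorem exists_apply_eq (hH : IsHaarSubspace n H) (hX : ∃ y : Fin n → X, Injective y)
    (hkn : k ≤ n) (hx : Injective x) (r : Fin k → ℝ) : ∃ f ∈ H, ∀ i, f (x i) = r i := by
  classical
  obtain ⟨y, hy⟩ := hX
  have hxk : #(univ.image x) = k := by simp [card_image_of_injective _ hx]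
  have hyn : #(univ.image y) = n := by simp [card_image_of_injective _ hy]
  obtain ⟨u, hxu, -, hu⟩ := exists_subsuperset_card_eq subset_union_left (hxk.trans_le hkn)
    (hyn.symm.trans_le (card_le_card (subset_union_right (s₁ := univ.image x))))
  set e := u.equivFinOfCardEq hu
  obtain ⟨f, hf, -⟩ := hH.2 (fun j => e.symm j) (Subtype.val_injective.comp e.symm.injective)
    fun j => extend x r 0 (e.symm j)
  refine ⟨f, f.2, fun i => ?_⟩
  have hxi : (e.symm (e ⟨x i, hxu (mem_image_of_mem x (mem_univ i))⟩) : X) = x i := by simp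
  rw [← hxi, hf, hxi, hx.extend_apply]

theorem eq_zero_of_apply_eq_zero (hH : IsHaarSubspace n H) (hnk : n ≤ k) (hx : Injective x)
    {g : C(X, ℝ)} (hg : g ∈ H) (hg0 : ∀ i, g (x i) = 0) : g = 0 := by
  obtain ⟨f, -, huniq⟩ := hH.2 (x ∘ Fin.castLE hnk) (hx.comp (Fin.castLE_injective hnk)) 0
  have hgf : (⟨g, hg⟩ : H) = f := huniq _ fun j => hg0 _
  have h0f : (0 : H) = f := huniq _ fun j => rfl
  exact congrArg Subtype.val (hgf.trans h0f.symm)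

theorem lt_of_sum_mul_apply_eq_zero (hH : IsHaarSubspace n H) (hX : ∃ y : Fin n → X, Injective y)
    (hx : Injective x) {w : Fin k → ℝ} (hw : w ≠ 0) (hwH : ∀ f ∈ H, ∑ i, w i * f (x i) = 0) :
    n < k := by
  by_contra! hkn
  obtain ⟨f, hf, hfx⟩ := hH.exists_apply_eq hX hkn hx w
  have hww : ∑ i, w i * w i = 0 := by simpa only [hfx] using hwH f hf
  refine hw (funext fun i => mul_self_eq_zero.1 ?_)
  exact (sum_eq_zero_iff_of_nonneg fun j _ => mul_self_nonneg (w j)).1 hww i (mem_univ i)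

theorem exists_pos_mul_norm_le [CompactSpace X] (hH : IsHaarSubspace n H) (hnk : n ≤ k)
    (hx : Injective x) {w : Fin k → ℝ} (hw : ∀ i, w i ≠ 0) :
    ∃ γ > 0, ∀ g ∈ H, γ * ‖g‖ ≤ ‖fun i => w i * g (x i)‖ := by
  let T : C(X, ℝ) →ₗ[ℝ] Fin k → ℝ := LinearMap.pi fun i =>
    w i • (ContinuousMap.evalCLM ℝ (x i) : C(X, ℝ) →L[ℝ] ℝ).toLinearMap
  have hT : ∀ g, T g = fun i => w i * g (x i) := fun g => rfl
  obtain ⟨γ, hγ, hγT⟩ := H.exists_pos_mul_norm_le T fun g hg hg0 =>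
    hH.eq_zero_of_apply_eq_zero hnk hx hg fun i =>
      (mul_eq_zero.1 (congrFun ((hT g).symm.trans hg0) i)).resolve_left (hw i)
  exact ⟨γ, hγ, fun g hg => (hγT g hg).trans_eq (congrArg norm (hT g))⟩

theorem exists_pos_forall_exists_mul_norm_le [CompactSpace X] (hH : IsHaarSubspace n H)
    (hX : ∃ y : Fin n → X, Injective y) (hx : Injective x) {lam r : Fin k → ℝ}
    (hlam : ∀ i, 0 < lam i) (hsum : ∑ i, lam i = 1) (hr : ∀ i, r i ≠ 0)
    (horth : ∀ f ∈ H, ∑ i, lam i * r i * f (x i) = 0) :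
    ∃ γ > 0, ∀ g ∈ H, ∃ j, γ * ‖g‖ ≤ r j * g (x j) := by
  obtain ⟨i₀, -, -⟩ := exists_ne_zero_of_sum_ne_zero (hsum.symm ▸ one_ne_zero : ∑ i, lam i ≠ 0)
  have hw : ∀ i, lam i * r i ≠ 0 := fun i => mul_ne_zero (hlam i).ne' (hr i)
  have hnk := hH.lt_of_sum_mul_apply_eq_zero hX hx (fun h => hw i₀ (congrFun h i₀)) horth
  obtain ⟨γ, hγ, hγg⟩ := hH.exists_pos_mul_norm_le hnk.le hx hw
  refine ⟨γ, hγ, fun g hg => ?_⟩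
  obtain ⟨j, -, hj⟩ := exists_max_image univ (fun i => r i * g (x i)) ⟨i₀, mem_univ _⟩
  have hM := abs_mul_le_of_sum_mul_eq_zero (fun i => (hlam i).le) hsum
    (by simpa only [mul_assoc] using horth g hg) (fun i => hj i (mem_univ i))
  refine ⟨j, (hγg g hg).trans <| (pi_norm_le_iff_of_nonneg ((abs_nonneg _).trans (hM i₀))).2
    fun i => ?_⟩
  simpa only [Real.norm_eq_abs, mul_assoc] using hM i

end IsHaarSubspace

theorem abs_apply_sub_le_iSup_norm_sub {X A : Type*} [TopologicalSpace X] [CompactSpace X]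
    {F : A → C(X, ℝ)} {f : C(X, ℝ)} (hF : BddAbove (Set.range fun b => ‖F b - f‖))
    (g : C(X, ℝ)) (b : A) (p : X) : |F b p - g p| ≤ ⨆ c, ‖F c - g‖ := by
  have hFg : BddAbove (Set.range fun c => ‖F c - g‖) := by
    obtain ⟨C, hC⟩ := hF
    refine ⟨C + ‖f - g‖, Set.forall_mem_range.2 fun c => ?_⟩
    exact (norm_sub_le_norm_sub_add_norm_sub _ _ _).trans (by gcongr; exact hC ⟨c, rfl⟩)
  exact (ContinuousMap.norm_coe_le_norm (F b - g) p).trans (le_ciSup hFg b)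

theorem strong_unicity_general
    {X : Type*} [TopologicalSpace X] [CompactSpace X]
    {A : Type*}
    {n : ℕ}
    (hX : ∃ y : Fin (n + 1) → X, Function.Injective y)
    (H : Submodule ℝ C(X, ℝ)) (hHaar : IsHaarSubspace n H)
    (F : A → C(X, ℝ))
    (fs : C(X, ℝ)) (hfs : fs ∈ H)
    (k : ℕ)
    (a : Fin k → A) (x : Fin k → X) (lam : Fin k → ℝ)
    (hlam : ∀ i, 0 < lam i) (hsum : (∑ i, lam i) = 1)
    (hi' : ∀ f ∈ H, (∑ i, lam i * (F (a i) (x i) - fs (x i)) * f (x i)) = 0)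
    (hii : ∀ i, |F (a i) (x i) - fs (x i)| = ‖F (a i) - fs‖ ∧
        ‖F (a i) - fs‖ = ⨆ b : A, ‖F b - fs‖)
    (hx : Function.Injective x)
    (hne : (⨆ b : A, ‖F b - fs‖) ≠ 0) :
    ∃ γ : ℝ, 0 < γ ∧
      ∀ h ∈ H, (⨆ b : A, ‖F b - fs‖) + γ * ‖fs - h‖ ≤ ⨆ b : A, ‖F b - h‖ := by
  set E := ⨆ b : A, ‖F b - fs‖
  set r : Fin k → ℝ := fun i => F (a i) (x i) - fs (x i)
  have hr : ∀ i, |r i| = E := fun i => (hii i).1.trans (hii i).2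
  have hE : 0 < E := (Real.iSup_nonneg fun b => norm_nonneg _).lt_of_ne' hne
  -- In `ℝ`, `⨆` of an unbounded family is `0`.
  have hbdd : BddAbove (Set.range fun b => ‖F b - fs‖) :=
    by_contra fun h => hne (Real.iSup_of_not_bddAbove h)
  obtain ⟨y, hy⟩ := hX
  obtain ⟨γ, hγ, hγg⟩ := hHaar.exists_pos_forall_exists_mul_norm_le
    ⟨y ∘ Fin.castSucc, hy.comp (Fin.castSucc_injective n)⟩ hx hlam hsum
    (fun i => abs_ne_zero.1 ((hr i).trans_ne hne)) hi'
  refine ⟨γ / E, by positivity, fun h hh => ?_⟩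
  obtain ⟨j, hj⟩ := hγg _ (H.sub_mem hfs hh)
  have hS := abs_apply_sub_le_iSup_norm_sub hbdd h (a j) (x j)
  refine le_of_mul_le_mul_left ?_ hE
  calc E * (E + γ / E * ‖fs - h‖) = |r j| * |r j| + γ * ‖fs - h‖ := by
        rw [hr j]; field_simp
    _ ≤ r j * (F (a j) (x j) - h (x j)) := by
        rw [abs_mul_abs_self]; simp only [ContinuousMap.sub_apply] at hj; linarith
    _ ≤ E * ⨆ b, ‖F b - h‖ := by
        rw [← hr j]; exact (le_abs_self _).trans (by rw [abs_mul]; gcongr)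

/-- **Strong unicity theorem.** Suppose `X` has at least `n + 1` points and
`f⋆ ∈ H` is a BSA to `{f_a}_{a ∈ A}` from the `n`-dimensional Haar subspace
`H` satisfying (i') and (ii) for some `1 ≤ k ≤ n + 1` with distinct points
`x₁, …, x_k` and nonzero common value in (ii). Then there is `γ > 0` with
`max_a ‖f_a - h‖ ≥ max_a ‖f_a - f⋆‖ + γ ‖f⋆ - h‖` for all `h ∈ H`. -/
theorem strong_unicity
    {X : Type*} [TopologicalSpace X] [CompactSpace X] [T2Space X]
    {A : Type*} [TopologicalSpace A] [CompactSpace A] [T2Space A] [Nonempty A]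
    {n : ℕ} (hn : 1 ≤ n)
    (hX : ∃ y : Fin (n + 1) → X, Function.Injective y)
    (H : Submodule ℝ C(X, ℝ)) (hHaar : IsHaarSubspace n H)
    (F : A → C(X, ℝ)) (hF : Continuous F)
    (fs : C(X, ℝ)) (hfs : fs ∈ H)
    (hBSA : ∀ f ∈ H, (⨆ a : A, ‖F a - fs‖) ≤ ⨆ a : A, ‖F a - f‖)
    (k : ℕ) (hk1 : 1 ≤ k) (hk2 : k ≤ n + 1)
    (a : Fin k → A) (x : Fin k → X) (lam : Fin k → ℝ)
    (hlam : ∀ i, 0 < lam i) (hsum : (∑ i, lam i) = 1)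
    (hi' : ∀ f ∈ H, (∑ i, lam i * (F (a i) (x i) - fs (x i)) * f (x i)) = 0)
    (hii : ∀ i, |F (a i) (x i) - fs (x i)| = ‖F (a i) - fs‖ ∧
        ‖F (a i) - fs‖ = ⨆ b : A, ‖F b - fs‖)
    (hx : Function.Injective x)
    (hne : (⨆ b : A, ‖F b - fs‖) ≠ 0) :
    ∃ γ : ℝ, 0 < γ ∧
      ∀ h ∈ H, (⨆ b : A, ‖F b - fs‖) + γ * ‖fs - h‖ ≤ ⨆ b : A, ‖F b - h‖ :=
  strong_unicity_general hX H hHaar F fs hfs k a x lam hlam hsum hi' hii hx hne
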